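/- Let P be a ranked poset with up operator U_x and down operator D_y defined via weight functions ψ, ψ^⊥, and suppose D_y U_x = f(x,y) U_x D_y for a rational function f, and φ is a linear functional with φ ∘ U_x = g(x) · φ ∘ D_x. Then for every λ in P: Σ_ν φ(ν) s_{ν/λ}(x₁,…,xₙ) = ∏_{i=1}^n g(x_i) · ∏_{1 ≤ i < j ≤ n} f(x_i, x_j) · Σ_μ φ(μ) s^⊥_{λ/μ}(x₁,…,xₙ). -/

import Mathlib

/-!
Work in the ring of power series in `x₁, …, xₙ` whose coefficients are endomorphisms of
`K[P] = P →₀ K`. There `U_{x_i}` and `D_{x_i}` become one-variable series `U(x_i) = ∑ₖ uₖ x_iᵏ`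
and `D(x_i)`, the commutation relation says `D(x_j) U(x_i) = f(x_i, x_j) U(x_i) D(x_j)` for
`i ≠ j`, where `f(x_i, x_j)` is central because its coefficients are scalars, and the projection
identity says `φ(U(x_i) A) = g(x_i) φ(D(x_i) A)` for every series `A`.

Applying `φ` to `U(xₙ) ⋯ U(x₁)`, the projection identity turns the leftmost factor into
`g(xₙ) D(xₙ)`, and moving `D(xₙ)` to the right end through the remaining factors produces
`∏_{j<n} f(x_j, xₙ)`; induction on the number of factors gives
`φ(U(xₙ) ⋯ U(x₁)) = ∏ g(x_i) ∏_{i<j} f(x_i, x_j) φ(D(x₁) ⋯ D(xₙ))`. Finally, a coefficient of an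
ordered product of such series, applied to `λ`, is a sum over chains in `P` weighted by `ψ` resp.
`ψ^⊥`, which is how `s_{ν/λ}` and `s^⊥_{λ/μ}` are defined.
-/

noncomputable section

variable {P : Type*} [PartialOrder P] {K : Type*} [Field K]

/-- The degree-`k` piece of the up operator `U_x` determined by the weight
function `ψ` on a ranked poset: on a finite formal sum `c` it acts linearly by
`λ ↦ Σ_{ν : rk ν = rk λ + k} ψ_{ν/λ} ν`. -/
def uStep (psi : P → P → K) (rk : P → ℕ) (k : ℕ) (c : P →₀ K) : P →₀ K :=
  c.sum fun lam a =>
    a • ∑ᶠ ν ∈ {ν : P | rk ν = rk lam + k}, Finsupp.single ν (psi ν lam)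

/-- The degree-`k` piece of the down operator `D_y` determined by the weight
function `ψ^⊥`: `λ ↦ Σ_{μ : rk λ = rk μ + k} ψ^⊥_{λ/μ} μ`. -/
def dStep (psiP : P → P → K) (rk : P → ℕ) (k : ℕ) (c : P →₀ K) : P →₀ K :=
  c.sum fun lam a =>
    a • ∑ᶠ mu ∈ {mu : P | rk lam = rk mu + k}, Finsupp.single mu (psiP lam mu)

/-- The coefficient at the monomial `d` of the polynomial
`s_{lam/mu}(x₁,…,xₙ) = ⟨U_{xₙ} ⋯ U_{x₁} mu, lam⟩`: a sum over chains
`mu = T 0, T 1, …, T n = lam` whose `i`-th step raises rank by `d i`,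
weighted by the product of the `ψ` weights. -/
def sCoeff (psi : P → P → K) (rk : P → ℕ) (n : ℕ) (mu lam : P)
    (d : Fin n →₀ ℕ) : K :=
  ∑ᶠ T ∈ {T : Fin (n + 1) → P | T 0 = mu ∧ T (Fin.last n) = lam ∧
      ∀ i : Fin n, rk (T i.succ) = rk (T i.castSucc) + d i},
    ∏ i : Fin n, psi (T i.succ) (T i.castSucc)

/-- The coefficient at the monomial `d` of the polynomial
`s^⊥_{lam/mu}(x₁,…,xₙ) = ⟨D_{x₁} ⋯ D_{xₙ} lam, mu⟩` (the operator `D_{xₙ}`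
acts first, whence the reversed variable indices). -/
def sPerpCoeff (psiP : P → P → K) (rk : P → ℕ) (n : ℕ) (lam mu : P)
    (d : Fin n →₀ ℕ) : K :=
  ∑ᶠ T ∈ {T : Fin (n + 1) → P | T 0 = lam ∧ T (Fin.last n) = mu ∧
      ∀ i : Fin n, rk (T i.castSucc) = rk (T i.succ) + d i.rev},
    ∏ i : Fin n, psiP (T i.castSucc) (T i.succ)

/-- The formal power series `g(x_i)` in the variables `x₁,…,xₙ`, obtained by
substituting the variable `i` into a one-variable series with coefficients `G`. -/
def subst1 {n : ℕ} (G : ℕ → K) (i : Fin n) : MvPowerSeries (Fin n) K :=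
  fun d => if d.support ⊆ {i} then G (d i) else 0

/-- The formal power series `f(x_i, x_j)`, obtained by substituting the
variables `i` and `j` into a two-variable series with coefficients `F`. -/
def subst2 {n : ℕ} (F : ℕ → ℕ → K) (i j : Fin n) : MvPowerSeries (Fin n) K :=
  fun d => if d.support ⊆ {i, j} then F (d i) (d j) else 0

/-- The series `Σ_ν φ(ν) s_{ν/lam}(x₁,…,xₙ)`, each coefficient being computed
as a `finsum` over all `ν`. -/
def phiUpSum (psi : P → P → K) (rk : P → ℕ) (phi : (P →₀ K) →ₗ[K] K) (n : ℕ)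
    (lam : P) : MvPowerSeries (Fin n) K :=
  fun d => ∑ᶠ ν : P, phi (Finsupp.single ν 1) * sCoeff psi rk n lam ν d

/-- The series `Σ_μ φ(μ) s^⊥_{lam/μ}(x₁,…,xₙ)`. -/
def phiDownSum (psiP : P → P → K) (rk : P → ℕ) (phi : (P →₀ K) →ₗ[K] K) (n : ℕ)
    (lam : P) : MvPowerSeries (Fin n) K :=
  fun d => ∑ᶠ mu : P, phi (Finsupp.single mu 1) * sPerpCoeff psiP rk n lam mu d


open Finset

namespace MvPowerSeries

section VarSeries

variable {σ R : Type*} [DecidableEq σ] [Semiring R]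

def varSeries (a : ℕ → R) (i : σ) : MvPowerSeries σ R :=
  fun d => if d.support ⊆ {i} then a (d i) else 0

/-- The series `c(x_i, x_j)`; for `i = j` this is not `c(x_i, x_i)`. -/
def pairSeries (c : ℕ → ℕ → R) (i j : σ) : MvPowerSeries σ R :=
  fun d => if d.support ⊆ {i, j} then c (d i) (d j) else 0

theorem coeff_varSeries (a : ℕ → R) (i : σ) (d : σ →₀ ℕ) :
    coeff d (varSeries a i) = if d.support ⊆ {i} then a (d i) else 0 :=
  rfl

theorem coeff_pairSeries (c : ℕ → ℕ → R) (i j : σ) (d : σ →₀ ℕ) :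
    coeff d (pairSeries c i j) = if d.support ⊆ {i, j} then c (d i) (d j) else 0 :=
  rfl

theorem coeff_varSeries_mul (a : ℕ → R) (i : σ) (B : MvPowerSeries σ R) (d : σ →₀ ℕ) :
    coeff d (varSeries a i * B) =
      ∑ k ∈ range (d i + 1), a k * coeff (d - Finsupp.single i k) B := by
  rw [coeff_mul]
  symm
  refine sum_bij_ne_zero (fun k _ _ => (Finsupp.single i k, d - Finsupp.single i k))
    (fun k hk _ => ?_) (fun k _ _ l _ _ h => ?_) (fun p hp hne => ?_) (fun k _ _ => ?_)
  · rw [mem_range] at hk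
    exact HasAntidiagonal.mem_antidiagonal.2
      (add_tsub_cancel_of_le (Finsupp.single_le_iff.2 (by omega)))
  · simpa using congrArg (fun p => p.1 i) h
  · have hsupp : p.1.support ⊆ {i} := by
      by_contra h
      exact hne (by rw [coeff_varSeries, if_neg h, zero_mul])
    have hp1 : p.1 = Finsupp.single i (p.1 i) := Finsupp.support_subset_singleton.1 hsupp
    have hsum : p.1 + p.2 = d := HasAntidiagonal.mem_antidiagonal.1 hp
    have hp2 : d - Finsupp.single i (p.1 i) = p.2 := by
      rw [← hp1, ← hsum, add_tsub_cancel_left]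
    refine ⟨p.1 i, mem_range.2 ?_, ?_, by rw [hp2, ← hp1]⟩
    · have := congrArg (· i) hsum
      simp only [Finsupp.add_apply] at this
      omega
    · rw [coeff_varSeries, if_pos hsupp] at hne
      rwa [hp2]
  · rw [coeff_varSeries, if_pos Finsupp.support_single_subset, Finsupp.single_eq_same]

theorem coeff_varSeries_mul_of_forall_coeff_eq_zero (a : ℕ → R) (i : σ) {B : MvPowerSeries σ R}
    (hB : ∀ e : σ →₀ ℕ, e i ≠ 0 → coeff e B = 0) (d : σ →₀ ℕ) :
    coeff d (varSeries a i * B) = a (d i) * coeff (d.erase i) B := by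
  have herase : d - Finsupp.single i (d i) = d.erase i := by
    ext x
    rcases eq_or_ne x i with rfl | hx <;> simp [Finsupp.erase_ne, *]
  rw [coeff_varSeries_mul, sum_eq_single_of_mem (d i) (self_mem_range_succ _), herase]
  intro k hk hne
  rw [hB _ (by simp only [Finsupp.tsub_apply, Finsupp.single_eq_same, mem_range] at hk ⊢; omega),
    mul_zero]

theorem varSeries_mul_varSeries (a b : ℕ → R) {i j : σ} (hij : i ≠ j) :
    varSeries a i * varSeries b j = pairSeries (fun x y => a x * b y) i j := by
  ext d
  have hfree : ∀ e : σ →₀ ℕ, e i ≠ 0 → coeff e (varSeries b j) = 0 := fun e he => by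
    rw [coeff_varSeries, if_neg fun h => he (Finsupp.notMem_support_iff.1 fun hi => hij
      (mem_singleton.1 (h hi)))]
  rw [coeff_varSeries_mul_of_forall_coeff_eq_zero a i hfree, coeff_varSeries, coeff_pairSeries,
    Finsupp.erase_ne hij.symm]
  simp only [Finsupp.support_erase, ← subset_insert_iff]
  split_ifs <;> simp

theorem pairSeries_comm (c : ℕ → ℕ → R) (i j : σ) :
    pairSeries c j i = pairSeries (fun x y => c y x) i j := by
  ext d
  simp only [coeff_pairSeries, pair_comm]

theorem map_pairSeries {S : Type*} [Semiring S] (f : R →+* S) (c : ℕ → ℕ → R) (i j : σ) :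
    map f (pairSeries c i j) = pairSeries (fun x y => f (c x y)) i j := by
  ext d
  simp only [coeff_map, coeff_pairSeries]
  split_ifs <;> simp

theorem eq_single_add_single_of_support_subset {i j : σ} (hij : i ≠ j) {e : σ →₀ ℕ}
    (he : e.support ⊆ {i, j}) : e = Finsupp.single i (e i) + Finsupp.single j (e j) := by
  ext x
  by_cases hxi : x = i
  · subst hxi; simp [hij]
  by_cases hxj : x = j
  · subst hxj; simp [Ne.symm hij]
  have : x ∉ e.support := fun hx => by simpa [hxi, hxj] using he hx
  simp [Finsupp.notMem_support_iff.1 this, Ne.symm hxi, Ne.symm hxj]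

theorem pairSeries_mul_pairSeries (c c' : ℕ → ℕ → R) {i j : σ} (hij : i ≠ j) :
    pairSeries c i j * pairSeries c' i j =
      pairSeries (fun a b => ∑ p ∈ antidiagonal a, ∑ q ∈ antidiagonal b,
        c p.1 q.1 * c' p.2 q.2) i j := by
  ext d
  rw [coeff_mul, coeff_pairSeries]
  split_ifs with hd
  · have hsub : ∀ p ∈ antidiagonal d, p.1.support ⊆ {i, j} ∧ p.2.support ⊆ {i, j} :=
      fun p hp => by
        rw [HasAntidiagonal.mem_antidiagonal] at hp
        subst hp
        exact ⟨fun x hx => hd (Finsupp.support_mono le_self_add hx),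
          fun x hx => hd (Finsupp.support_mono le_add_self hx)⟩
    rw [sum_congr rfl fun p hp => by
      rw [coeff_pairSeries, coeff_pairSeries, if_pos (hsub p hp).1, if_pos (hsub p hp).2],
      ← sum_product']
    refine sum_nbij' (fun p => ((p.1 i, p.2 i), (p.1 j, p.2 j)))
      (fun q => (Finsupp.single i q.1.1 + Finsupp.single j q.2.1,
        Finsupp.single i q.1.2 + Finsupp.single j q.2.2)) (fun p hp => ?_) (fun q hq => ?_)
      (fun p hp => ?_) (fun q _ => ?_) (fun p _ => rfl)
    · rw [← HasAntidiagonal.mem_antidiagonal.1 hp, mem_product,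
        HasAntidiagonal.mem_antidiagonal, HasAntidiagonal.mem_antidiagonal]
      exact ⟨rfl, rfl⟩
    · simp only [mem_product, HasAntidiagonal.mem_antidiagonal] at hq ⊢
      rw [eq_single_add_single_of_support_subset hij hd, ← hq.1, ← hq.2]
      simp only [Finsupp.single_add]
      abel
    · exact Prod.ext (eq_single_add_single_of_support_subset hij (hsub p hp).1).symm
        (eq_single_add_single_of_support_subset hij (hsub p hp).2).symm
    · simp [hij, Ne.symm hij]
  · refine sum_eq_zero fun p hp => ?_
    rw [HasAntidiagonal.mem_antidiagonal] at hp
    subst hp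
    rw [coeff_pairSeries, coeff_pairSeries]
    split_ifs with h1 h2
    · exact absurd (Finsupp.support_add.trans (union_subset h1 h2)) hd
    all_goals simp

theorem coeff_list_prod_varSeries (a : ℕ → R) {L : List σ} (hL : L.Nodup) (d : σ →₀ ℕ) :
    coeff d ((L.map (varSeries a)).prod) =
      if d.support ⊆ L.toFinset then (L.map fun i => a (d i)).prod else 0 := by
  induction L generalizing d with
  | nil => simp [coeff_one, Finsupp.support_eq_empty]
  | cons i L ih =>
    obtain ⟨hiL, hL⟩ := List.nodup_cons.1 hL
    have hfree : ∀ e : σ →₀ ℕ, e i ≠ 0 → coeff e ((L.map (varSeries a)).prod) = 0 :=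
      fun e he => by
        rw [ih hL, if_neg fun h => hiL (List.mem_toFinset.1 (h (Finsupp.mem_support_iff.2 he)))]
    have hmap : (L.map fun j => a ((d.erase i) j)) = L.map fun j => a (d j) :=
      List.map_congr_left fun j hj => by rw [Finsupp.erase_ne (ne_of_mem_of_not_mem hj hiL)]
    rw [List.map_cons, List.prod_cons, coeff_varSeries_mul_of_forall_coeff_eq_zero a i hfree,
      ih hL, hmap]
    simp only [Finsupp.support_erase, ← subset_insert_iff, List.toFinset_cons, List.map_cons,
      List.prod_cons]
    split_ifs <;> simp

theorem commute_map_algebraMap {K E : Type*} [CommSemiring K] [Semiring E] [Algebra K E]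
    (f : MvPowerSeries σ K) (A : MvPowerSeries σ E) :
    Commute (map (algebraMap K E) f) A := by
  ext d
  rw [coeff_mul, coeff_mul]
  nth_rw 1 [← HasAntidiagonal.map_swap_antidiagonal]
  rw [sum_map]
  refine sum_congr rfl fun p _ => ?_
  rw [coeff_map]
  exact Algebra.commutes _ _

end VarSeries

section Littlewood

variable {σ K E : Type*} [CommSemiring K] [Semiring E] [Algebra K E]

def mapLinear (ev : E →ₗ[K] K) (A : MvPowerSeries σ E) : MvPowerSeries σ K :=
  fun d => ev (coeff d A)

theorem coeff_mapLinear (ev : E →ₗ[K] K) (A : MvPowerSeries σ E) (d : σ →₀ ℕ) :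
    coeff d (mapLinear ev A) = ev (coeff d A) :=
  rfl

theorem mapLinear_map_mul [DecidableEq σ] (ev : E →ₗ[K] K) (f : MvPowerSeries σ K)
    (A : MvPowerSeries σ E) :
    mapLinear ev (map (algebraMap K E) f * A) = f * mapLinear ev A := by
  ext d
  rw [coeff_mapLinear, coeff_mul, coeff_mul, map_sum]
  refine sum_congr rfl fun p _ => ?_
  rw [coeff_map, ← Algebra.smul_def, map_smul, smul_eq_mul, coeff_mapLinear]

variable [DecidableEq σ] {U D : ℕ → E} {F : ℕ → ℕ → K} {G : ℕ → K} {ev : E →ₗ[K] K}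

theorem down_mul_up
    (hcomm : ∀ a b, D b * U a =
      ∑ x ∈ range (a + 1), ∑ y ∈ range (b + 1), F x y • (U (a - x) * D (b - y)))
    {i j : σ} (hij : i ≠ j) :
    varSeries D j * varSeries U i =
      map (algebraMap K E) (pairSeries F i j) * (varSeries U i * varSeries D j) := by
  rw [varSeries_mul_varSeries _ _ hij.symm, pairSeries_comm, varSeries_mul_varSeries _ _ hij,
    map_pairSeries, pairSeries_mul_pairSeries _ _ hij]
  congr 1
  funext a b
  simp only [hcomm, Finset.Nat.sum_antidiagonal_eq_sum_range_succ_mk, Algebra.smul_def]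

theorem down_mul_list_prod_up
    (hcomm : ∀ a b, D b * U a =
      ∑ x ∈ range (a + 1), ∑ y ∈ range (b + 1), F x y • (U (a - x) * D (b - y)))
    {L : List σ} {i : σ} (hi : i ∉ L) :
    varSeries D i * (L.map (varSeries U)).prod =
      map (algebraMap K E) (L.map fun j => pairSeries F j i).prod *
        ((L.map (varSeries U)).prod * varSeries D i) := by
  induction L with
  | nil => simp
  | cons j L ih =>
    simp only [List.mem_cons, not_or] at hi
    simp only [List.map_cons, List.prod_cons, map_mul]
    rw [← mul_assoc, down_mul_up hcomm (Ne.symm hi.1), mul_assoc, mul_assoc, ih hi.2,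
      ← (commute_map_algebraMap _ (varSeries U j)).left_comm]
    simp only [mul_assoc]

theorem mapLinear_up_mul
    (hproj : ∀ k A, ev (U k * A) = ∑ t ∈ range (k + 1), G t * ev (D (k - t) * A))
    (i : σ) (A : MvPowerSeries σ E) :
    mapLinear ev (varSeries U i * A) = varSeries G i * mapLinear ev (varSeries D i * A) := by
  ext e
  have hsplit : ∀ t k, t ≤ k → e - Finsupp.single i k =
      e - Finsupp.single i t - Finsupp.single i (k - t) := fun t k htk => by
    rw [tsub_tsub, ← Finsupp.single_add, Nat.add_sub_cancel' htk]
  set f : ℕ → ℕ → K := fun t l =>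
    G t * ev (D l * coeff (e - Finsupp.single i t - Finsupp.single i l) A)
  simp only [coeff_mapLinear, coeff_varSeries_mul, map_sum, hproj, mul_sum]
  calc ∑ k ∈ range (e i + 1), ∑ t ∈ range (k + 1),
        G t * ev (D (k - t) * coeff (e - Finsupp.single i k) A)
      = ∑ k ∈ range (e i + 1), ∑ t ∈ range (k + 1), f t (k - t) :=
        sum_congr rfl fun k _ => sum_congr rfl fun t ht => by
          rw [hsplit t k (Nat.lt_succ_iff.1 (mem_range.1 ht))]
    _ = ∑ t ∈ range (e i + 1), ∑ l ∈ range (e i + 1 - t), f t l := sum_range_diag_flip _ _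
    _ = _ := sum_congr rfl fun t ht => by
        rw [Finsupp.tsub_apply, Finsupp.single_eq_same, Nat.sub_add_comm
          (Nat.lt_succ_iff.1 (mem_range.1 ht))]

theorem mapLinear_list_prod_up_mul [Preorder σ] [DecidableLT σ]
    (hcomm : ∀ a b, D b * U a =
      ∑ x ∈ range (a + 1), ∑ y ∈ range (b + 1), F x y • (U (a - x) * D (b - y)))
    (hproj : ∀ k A, ev (U k * A) = ∑ t ∈ range (k + 1), G t * ev (D (k - t) * A))
    {L : List σ} (hL : L.Pairwise (· > ·)) (A : MvPowerSeries σ E) :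
    mapLinear ev ((L.map (varSeries U)).prod * A) =
      (L.map (varSeries G)).prod *
        (∏ j ∈ L.toFinset, ∏ i ∈ L.toFinset with i < j, pairSeries F i j) *
        mapLinear ev ((L.reverse.map (varSeries D)).prod * A) := by
  induction L generalizing A with
  | nil => simp
  | cons i L ih =>
    obtain ⟨hlt, hL⟩ := List.pairwise_cons.1 hL
    have hi : i ∉ L := fun h => lt_irrefl i (hlt i h)
    have hpairs : ∏ j ∈ (i :: L).toFinset, ∏ k ∈ (i :: L).toFinset with k < j, pairSeries F k j =
        (L.map fun j => pairSeries F j i).prod *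
          ∏ j ∈ L.toFinset, ∏ k ∈ L.toFinset with k < j, pairSeries F k j := by
      have hnot : ∀ j ∈ L.toFinset, ¬ i < j := fun j hj => (hlt j (List.mem_toFinset.1 hj)).asymm
      rw [List.toFinset_cons, prod_insert (mt List.mem_toFinset.1 hi), filter_insert, if_neg
        (lt_irrefl i), filter_true_of_mem fun j hj => hlt j (List.mem_toFinset.1 hj),
        List.prod_toFinset _ hL.nodup]
      exact congrArg _ (prod_congr rfl fun j hj => by rw [filter_insert, if_neg (hnot j hj)])
    rw [List.map_cons, List.prod_cons, mul_assoc, mapLinear_up_mul hproj, ← mul_assoc,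
      down_mul_list_prod_up hcomm hi, mul_assoc, mapLinear_map_mul, mul_assoc, ih hL, hpairs,
      List.reverse_cons, List.map_append, List.prod_append, List.map_singleton,
      List.prod_singleton, List.map_cons, List.prod_cons, mul_assoc _ (varSeries D i)]
    ring

end Littlewood

end MvPowerSeries

section Chains

open Finsupp

variable {P R : Type*} [CommSemiring R]

theorem Finsupp.finsum_mem_single_apply {α M : Type*} [AddCommMonoid M] {S : Set α} {f : α → M}
    (h : (S ∩ Function.support f).Finite) (b : α) :
    (∑ᶠ x ∈ S, single x (f x)) b = S.indicator f b := by
  classical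
  rw [finsum_mem_def, ← applyAddHom_apply, map_finsum _ (h.subset fun x hx => ?_),
    finsum_eq_single _ b fun x hx => ?_]
  · by_cases hb : b ∈ S <;> simp [hb]
  · by_cases hxS : x ∈ S <;> simp [hxS, Ne.symm hx]
  · by_cases hxS : x ∈ S
    · exact ⟨hxS, fun h0 => hx (by simp [hxS, h0])⟩
    · exact absurd (by simp [hxS]) hx

def chainWeight {n : ℕ} (M : Fin n → Module.End R (P →₀ R)) (T : Fin (n + 1) → P) : R :=
  ∏ i, M i (single (T i.castSucc) 1) (T i.succ)

theorem chainWeight_cons {n : ℕ} (M : Fin (n + 1) → Module.End R (P →₀ R)) (x : P)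
    (T : Fin (n + 1) → P) :
    chainWeight M (Fin.cons x T) =
      M 0 (single x 1) (T 0) * chainWeight (fun i => M i.succ) T := by
  simp [chainWeight, Fin.prod_univ_succ]

theorem LinearMap.apply_eq_sum_smul_single {N : Type*} [AddCommMonoid N] [Module R N]
    (f : (P →₀ R) →ₗ[R] N) (v : P →₀ R) :
    f v = ∑ x ∈ v.support, v x • f (Finsupp.single x 1) := by
  conv_lhs => rw [← Finsupp.sum_single v]
  rw [Finsupp.sum, map_sum]
  exact Finset.sum_congr rfl fun x _ => by rw [← smul_single_one, map_smul]

theorem LinearMap.apply_eq_finsum_mul (phi : (P →₀ R) →ₗ[R] R) (c : P →₀ R) :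
    phi c = ∑ᶠ ν, phi (Finsupp.single ν 1) * c ν := by
  rw [LinearMap.apply_eq_sum_smul_single, finsum_eq_sum_of_support_subset (s := c.support) _
    fun ν hν => Finsupp.mem_support_iff.2 (right_ne_zero_of_mul hν)]
  simp only [smul_eq_mul, mul_comm]

theorem finite_support_chainWeight {n : ℕ} (M : Fin n → Module.End R (P →₀ R)) (v : P →₀ R) :
    (Function.support fun T : Fin (n + 1) → P => v (T 0) * chainWeight M T).Finite := by
  induction n generalizing v with
  | zero =>
    refine (v.support.finite_toSet.image fun x _ => x).subset fun T hT => ⟨T 0, ?_, ?_⟩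
    · exact Finsupp.mem_support_iff.2 (left_ne_zero_of_mul hT)
    · funext i
      rw [Fin.fin_one_eq_zero i]
  | succ n ih =>
    have hfin : (⋃ x ∈ (v.support : Set P), Fin.cons (α := fun _ => P) x ''
        Function.support fun T' : Fin (n + 1) → P =>
          M 0 (single x 1) (T' 0) * chainWeight (fun i => M i.succ) T').Finite :=
      v.support.finite_toSet.biUnion fun x _ => (ih _ _).image _
    refine hfin.subset fun T hT => ?_
    rw [← Fin.cons_self_tail T, Function.mem_support, chainWeight_cons] at hT
    exact Set.mem_biUnion (Finsupp.mem_support_iff.2 (left_ne_zero_of_mul hT))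
      ⟨Fin.tail T, right_ne_zero_of_mul hT, Fin.cons_self_tail T⟩

theorem Module.End.ofFn_reverse_prod_apply {n : ℕ} (M : Fin n → Module.End R (P →₀ R))
    (v : P →₀ R) :
    (List.ofFn M).reverse.prod v =
      ∑ᶠ T : Fin (n + 1) → P, (v (T 0) * chainWeight M T) • single (T (Fin.last n)) 1 := by
  induction n generalizing v with
  | zero =>
    rw [List.ofFn_zero, List.reverse_nil, List.prod_nil, Module.End.one_apply,
      ← finsum_comp_equiv (Equiv.funUnique (Fin 1) P).symm,
      finsum_eq_sum_of_support_subset (s := v.support) _ fun x hx => ?_]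
    · conv_lhs => rw [← Finsupp.sum_single v]
      simp [chainWeight, Finsupp.sum]
    · exact Finsupp.mem_support_iff.2 fun h => hx (by simp [h])
  | succ n ih =>
    let e := (Equiv.prodComm _ _).trans (Fin.consEquiv fun _ : Fin (n + 2) => P)
    set f : (Fin (n + 2) → P) → P →₀ R :=
      fun T => (v (T 0) * chainWeight M T) • single (T (Fin.last (n + 1))) 1 with hf
    have hfin : Function.HasFiniteSupport fun p => f (e p) :=
      ((finite_support_chainWeight M v).preimage e.injective.injOn).subset fun p hp h =>
        hp (by simp only [hf, h, zero_smul])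
    rw [List.ofFn_succ, List.reverse_cons, List.prod_append, List.prod_singleton,
      Module.End.mul_apply, ih, ← finsum_comp_equiv e, finsum_curry _ hfin]
    -- summing over the first vertex of the chain rebuilds `M 0 v`
    refine finsum_congr fun T => ?_
    have he : ∀ b, e (T, b) = Fin.cons b T := fun _ => rfl
    simp only [hf, he, Fin.cons_zero, chainWeight_cons, Fin.cons_last]
    rw [finsum_eq_sum_of_support_subset (s := v.support) _ fun b hb => Finsupp.mem_support_iff.2
      fun h => hb (by simp only [h, zero_mul, zero_smul]), ← Finset.sum_smul,
      LinearMap.apply_eq_sum_smul_single, finsetSum_apply, Finset.sum_mul]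
    simp only [Finsupp.smul_apply, smul_eq_mul, mul_assoc]

theorem Module.End.ofFn_reverse_prod_single_apply {n : ℕ} (M : Fin n → Module.End R (P →₀ R))
    (a b : P) :
    (List.ofFn M).reverse.prod (single a 1) b =
      ∑ᶠ T ∈ {T : Fin (n + 1) → P | T 0 = a ∧ T (Fin.last n) = b}, chainWeight M T := by
  have hfin : Function.HasFiniteSupport fun T : Fin (n + 1) → P =>
      (single a (1 : R) (T 0) * chainWeight M T) • single (T (Fin.last n)) (1 : R) :=
    (finite_support_chainWeight M (single a 1)).subset fun T hT h => hT (by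
      simp only at h ⊢
      rw [h, zero_smul])
  rw [Module.End.ofFn_reverse_prod_apply, ← applyAddHom_apply, map_finsum _ hfin, finsum_mem_def]
  refine finsum_congr fun T => ?_
  classical
  rw [Set.indicator_apply]
  by_cases h0 : T 0 = a
  · by_cases hl : T (Fin.last n) = b
    · simp [h0, hl]
    · simp [h0, hl, Ne.symm hl]
  · simp [h0]

end Chains

section RankedPoset

open Finsupp

variable {P K : Type*} [Field K]

def uStepLin (psi : P → P → K) (rk : P → ℕ) (k : ℕ) : Module.End K (P →₀ K) :=
  linearCombination K fun lam => ∑ᶠ ν ∈ {ν : P | rk ν = rk lam + k}, single ν (psi ν lam)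

def dStepLin (psiP : P → P → K) (rk : P → ℕ) (k : ℕ) : Module.End K (P →₀ K) :=
  linearCombination K fun lam => ∑ᶠ mu ∈ {mu : P | rk lam = rk mu + k}, single mu (psiP lam mu)

theorem uStepLin_apply (psi : P → P → K) (rk : P → ℕ) (k : ℕ) (c : P →₀ K) :
    uStepLin psi rk k c = uStep psi rk k c :=
  rfl

theorem dStepLin_apply (psiP : P → P → K) (rk : P → ℕ) (k : ℕ) (c : P →₀ K) :
    dStepLin psiP rk k c = dStep psiP rk k c :=
  rfl

theorem subst1_eq_varSeries {n : ℕ} (G : ℕ → K) (i : Fin n) :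
    subst1 G i = MvPowerSeries.varSeries G i :=
  rfl

theorem subst2_eq_pairSeries {n : ℕ} (F : ℕ → ℕ → K) (i j : Fin n) :
    subst2 F i j = MvPowerSeries.pairSeries F i j :=
  rfl

theorem dStepLin_mul_uStepLin {psi psiP : P → P → K} {rk : P → ℕ} {F : ℕ → ℕ → K}
    (hcomm : ∀ (a b : ℕ) (c : P →₀ K),
      dStep psiP rk b (uStep psi rk a c) =
        ∑ i ∈ Finset.range (a + 1), ∑ j ∈ Finset.range (b + 1),
          F i j • uStep psi rk (a - i) (dStep psiP rk (b - j) c))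
    (a b : ℕ) :
    dStepLin psiP rk b * uStepLin psi rk a =
      ∑ x ∈ Finset.range (a + 1), ∑ y ∈ Finset.range (b + 1),
        F x y • (uStepLin psi rk (a - x) * dStepLin psiP rk (b - y)) :=
  LinearMap.ext fun c => by simpa [uStepLin_apply, dStepLin_apply] using hcomm a b c

theorem uStepLin_single_apply {psi : P → P → K} {rk : P → ℕ}
    (hfinU : ∀ (lam : P) (k : ℕ), {ν : P | psi ν lam ≠ 0 ∧ rk ν = rk lam + k}.Finite)
    (k : ℕ) (a b : P) :
    uStepLin psi rk k (single a 1) b = if rk b = rk a + k then psi b a else 0 := by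
  rw [uStepLin, linearCombination_single, one_smul,
    finsum_mem_single_apply (S := {ν | rk ν = rk a + k}) (f := (psi · a))
      ((hfinU a k).subset fun ν hν => ⟨hν.2, hν.1⟩), Set.indicator_apply]
  rfl

theorem dStepLin_single_apply {psiP : P → P → K} {rk : P → ℕ}
    (hfinD : ∀ (lam : P) (k : ℕ), {mu : P | psiP lam mu ≠ 0 ∧ rk lam = rk mu + k}.Finite)
    (k : ℕ) (a b : P) :
    dStepLin psiP rk k (single a 1) b = if rk a = rk b + k then psiP a b else 0 := by
  rw [dStepLin, linearCombination_single, one_smul,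
    finsum_mem_single_apply (S := {mu | rk a = rk mu + k}) (f := psiP a)
      ((hfinD a k).subset fun ν hν => ⟨hν.2, hν.1⟩), Set.indicator_apply]
  rfl

theorem sCoeff_eq_ofFn_reverse_prod_apply {psi : P → P → K} {rk : P → ℕ}
    (hfinU : ∀ (lam : P) (k : ℕ), {ν : P | psi ν lam ≠ 0 ∧ rk ν = rk lam + k}.Finite)
    (n : ℕ) (mu lam : P) (d : Fin n →₀ ℕ) :
    sCoeff psi rk n mu lam d =
      (List.ofFn fun i => uStepLin psi rk (d i)).reverse.prod (single mu 1) lam := by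
  classical
  rw [Module.End.ofFn_reverse_prod_single_apply, sCoeff, finsum_mem_def, finsum_mem_def]
  refine finsum_congr fun T => ?_
  simp only [chainWeight, uStepLin_single_apply hfinU, Finset.prod_ite_zero, Set.indicator_apply,
    Set.mem_ofPred_eq, Finset.mem_univ, true_implies]
  split_ifs <;> tauto

theorem sPerpCoeff_eq_ofFn_reverse_prod_apply {psiP : P → P → K} {rk : P → ℕ}
    (hfinD : ∀ (lam : P) (k : ℕ), {mu : P | psiP lam mu ≠ 0 ∧ rk lam = rk mu + k}.Finite)
    (n : ℕ) (lam mu : P) (d : Fin n →₀ ℕ) :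
    sPerpCoeff psiP rk n lam mu d =
      (List.ofFn fun i => dStepLin psiP rk (d i.rev)).reverse.prod (single lam 1) mu := by
  classical
  rw [Module.End.ofFn_reverse_prod_single_apply, sPerpCoeff, finsum_mem_def, finsum_mem_def]
  refine finsum_congr fun T => ?_
  simp only [chainWeight, dStepLin_single_apply hfinD, Finset.prod_ite_zero, Set.indicator_apply,
    Set.mem_ofPred_eq, Finset.mem_univ, true_implies]
  split_ifs <;> tauto

open MvPowerSeries in
theorem phiUpSum_eq_mapLinear {psi : P → P → K} {rk : P → ℕ}
    (hfinU : ∀ (lam : P) (k : ℕ), {ν : P | psi ν lam ≠ 0 ∧ rk ν = rk lam + k}.Finite)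
    (phi : (P →₀ K) →ₗ[K] K) (n : ℕ) (lam : P) :
    phiUpSum psi rk phi n lam = mapLinear (phi ∘ₗ LinearMap.applyₗ (single lam 1))
      ((List.finRange n).reverse.map (varSeries (uStepLin psi rk))).prod := by
  ext d
  rw [coeff_mapLinear,
    coeff_list_prod_varSeries _ (List.nodup_reverse.2 (List.nodup_finRange n)), if_pos (by simp),
    List.map_reverse, ← List.ofFn_eq_map, LinearMap.comp_apply,
    LinearMap.applyₗ_apply_apply, LinearMap.apply_eq_finsum_mul]
  exact finsum_congr fun ν => by rw [sCoeff_eq_ofFn_reverse_prod_apply hfinU]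

open MvPowerSeries in
theorem phiDownSum_eq_mapLinear {psiP : P → P → K} {rk : P → ℕ}
    (hfinD : ∀ (lam : P) (k : ℕ), {mu : P | psiP lam mu ≠ 0 ∧ rk lam = rk mu + k}.Finite)
    (phi : (P →₀ K) →ₗ[K] K) (n : ℕ) (lam : P) :
    phiDownSum psiP rk phi n lam = mapLinear (phi ∘ₗ LinearMap.applyₗ (single lam 1))
      ((List.finRange n).map (varSeries (dStepLin psiP rk))).prod := by
  ext d
  rw [coeff_mapLinear, coeff_list_prod_varSeries _ (List.nodup_finRange n),
    if_pos (by simp), LinearMap.comp_apply, LinearMap.applyₗ_apply_apply,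
    LinearMap.apply_eq_finsum_mul]
  refine finsum_congr fun mu => ?_
  rw [sPerpCoeff_eq_ofFn_reverse_prod_apply hfinD, List.ofFn_eq_map, ← List.map_reverse,
    List.finRange_reverse, List.map_map]
  simp only [Function.comp_def, Fin.rev_rev]

end RankedPoset

open MvPowerSeries in
theorem general_littlewood_general (psi psiP : P → P → K) (rk : P → ℕ)
    (hfinU : ∀ (lam : P) (k : ℕ), {ν : P | psi ν lam ≠ 0 ∧ rk ν = rk lam + k}.Finite)
    (hfinD : ∀ (lam : P) (k : ℕ), {mu : P | psiP lam mu ≠ 0 ∧ rk lam = rk mu + k}.Finite)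
    (F : ℕ → ℕ → K) (G : ℕ → K) (phi : (P →₀ K) →ₗ[K] K)
    (hcomm : ∀ (a b : ℕ) (c : P →₀ K),
      dStep psiP rk b (uStep psi rk a c) =
        ∑ i ∈ Finset.range (a + 1), ∑ j ∈ Finset.range (b + 1),
          F i j • uStep psi rk (a - i) (dStep psiP rk (b - j) c))
    (hproj : ∀ (k : ℕ) (c : P →₀ K),
      phi (uStep psi rk k c) =
        ∑ i ∈ Finset.range (k + 1), G i * phi (dStep psiP rk (k - i) c))
    (n : ℕ) (lam : P) :
    phiUpSum psi rk phi n lam =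
      (∏ i : Fin n, subst1 G i) *
      (∏ p ∈ Finset.univ.filter (fun p : Fin n × Fin n => p.1 < p.2),
        subst2 F p.1 p.2) *
      phiDownSum psiP rk phi n lam := by
  have hsorted : (List.finRange n).reverse.Pairwise (· > ·) :=
    List.pairwise_reverse.2 (List.pairwise_lt_finRange n)
  have hpairs : ∏ j ∈ (List.finRange n).reverse.toFinset,
      ∏ i ∈ (List.finRange n).reverse.toFinset with i < j, pairSeries F i j =
      ∏ p ∈ univ.filter (fun p : Fin n × Fin n => p.1 < p.2), subst2 F p.1 p.2 := by
    rw [List.toFinset_reverse, List.toFinset_finRange, prod_filter, Fintype.prod_prod_type,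
      prod_comm]
    simp only [prod_filter, subst2_eq_pairSeries]
  rw [phiUpSum_eq_mapLinear hfinU, phiDownSum_eq_mapLinear hfinD, ← mul_one (List.prod _),
    mapLinear_list_prod_up_mul (ev := phi ∘ₗ LinearMap.applyₗ (Finsupp.single lam 1))
      (dStepLin_mul_uStepLin hcomm) (fun k A => hproj k (A (Finsupp.single lam 1))) hsorted,
    List.reverse_reverse, mul_one, hpairs, List.map_reverse, List.prod_reverse,
    ← List.ofFn_eq_map, List.prod_ofFn]
  simp only [subst1_eq_varSeries]

/-- General framework: let `P` be a ranked poset with up and down operators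
given by weight functions `ψ, ψ^⊥` (supported on comparable pairs, with
finitely many terms in each degree).  Assume the commutation relation
`D_y U_x = f(x,y) U_x D_y` (stated coefficientwise, `F` being the coefficients
of `f`) and a projection identity `φ ∘ U_x = g(x) · φ ∘ D_x` for a linear
functional `φ` (applied coefficientwise, `G` being the coefficients of `g`).
Then for every `lam` in `P`:
`Σ_ν φ(ν) s_{ν/lam}(x₁,…,xₙ) = ∏_i g(x_i) · ∏_{i<j} f(x_i,x_j) · Σ_μ φ(μ) s^⊥_{lam/μ}(x₁,…,xₙ)`. -/
theorem general_littlewood (psi psiP : P → P → K) (rk : P → ℕ)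
    (htri : ∀ ν lam : P, psi ν lam ≠ 0 → lam ≤ ν)
    (htriP : ∀ lam mu : P, psiP lam mu ≠ 0 → mu ≤ lam)
    (hrk : ∀ a b : P, a ≤ b → rk a ≤ rk b)
    (hfinU : ∀ (lam : P) (k : ℕ), {ν : P | psi ν lam ≠ 0 ∧ rk ν = rk lam + k}.Finite)
    (hfinD : ∀ (lam : P) (k : ℕ), {mu : P | psiP lam mu ≠ 0 ∧ rk lam = rk mu + k}.Finite)
    (F : ℕ → ℕ → K) (G : ℕ → K) (phi : (P →₀ K) →ₗ[K] K)
    (hcomm : ∀ (a b : ℕ) (c : P →₀ K),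
      dStep psiP rk b (uStep psi rk a c) =
        ∑ i ∈ Finset.range (a + 1), ∑ j ∈ Finset.range (b + 1),
          F i j • uStep psi rk (a - i) (dStep psiP rk (b - j) c))
    (hproj : ∀ (k : ℕ) (c : P →₀ K),
      phi (uStep psi rk k c) =
        ∑ i ∈ Finset.range (k + 1), G i * phi (dStep psiP rk (k - i) c))
    (n : ℕ) (lam : P) :
    phiUpSum psi rk phi n lam =
      (∏ i : Fin n, subst1 G i) *
      (∏ p ∈ Finset.univ.filter (fun p : Fin n × Fin n => p.1 < p.2),
        subst2 F p.1 p.2) *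
      phiDownSum psiP rk phi n lam :=
  general_littlewood_general psi psiP rk hfinU hfinD F G phi hcomm hproj n lam

end
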